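/- arXiv:0804.1032 — 6 statements merged into one kernel-verified Lean document; each statement's English description precedes it below -/
import Mathlib

section
/- The Taylor expansion of $g_p(z)=\exp\left(t\frac{z-1}{1-pz}\right)$ at $z_0=1$ is $g_p(z)=\sum_{k=0}^\infty (z-1)^k Q_k(t,p)$ where $Q_0=1$ and $Q_k(t,p)=\frac{1}{(1-p)^k}\sum_{j=1}^k p^{k-j}\frac{t^j}{j!}\binom{k-1}{j-1}$ for $k\ge1$, valid for $|z-1|<\frac{1-p}{p}$ (all $z$ if $p=0$). -/
/-!
With `w = z - 1`, `a = t / (1 - p)` and `b = p / (1 - p)`, the exponent is `a w / (1 - b w)` with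
`‖b w‖ < 1`. Expanding `exp` into its power series and each `(1 - b w)⁻ʲ` into the negative binomial
series `∑ₘ multichoose j m (b w)ᵐ` gives an absolutely summable double series; collecting the
terms with `j + m = k` gives the coefficient of `wᵏ`, which is `Q_k` because
`multichoose j (k - j) = choose (k - 1) (j - 1)` for `j ≥ 1`, while `multichoose 0 m` vanishes
unless `m = 0`.
-/

/-- The factorial moments of the Pólya-Aeppli distribution. -/
noncomputable def polyaAeppliQ (t p : ℝ) (k : ℕ) : ℝ :=
  if k = 0 then 1 else
    (1 / (1 - p) ^ k) *
      ∑ j ∈ Finset.Icc 1 k, p ^ (k - j) * t ^ j / (Nat.factorial j) * (Nat.choose (k - 1) (j - 1))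

open Finset Nat

theorem HasSum.sum_antidiagonal {α A : Type*} [AddCommMonoid α] [TopologicalSpace α]
    [ContinuousAdd α] [RegularSpace α] [AddCommMonoid A] [HasAntidiagonal A] {f : A × A → α}
    {a : α} (hf : HasSum f a) :
    HasSum (fun n ↦ ∑ q ∈ antidiagonal n, f q) a :=
  (HasAntidiagonal.sigmaAntidiagonalEquivProd.hasSum_iff.2 hf).sigma fun n ↦ by
    simpa [Finset.sum_attach] using hasSum_fintype (fun q : antidiagonal n ↦ f q)

theorem hasSum_multichoose_mul_geometric {K : Type*} [NormedField K] [CompleteSpace K] (j : ℕ)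
    {r : K} (hr : ‖r‖ < 1) : HasSum (fun m ↦ (j.multichoose m : K) * r ^ m) ((1 - r)⁻¹ ^ j) := by
  rcases j with _ | i
  · rw [pow_zero]
    convert hasSum_ite_eq 0 (1 : K) using 1
    ext m
    cases m <;> simp
  · convert hasSum_choose_mul_geometric_of_norm_lt_one i hr using 1
    · ext m
      rw [multichoose_eq, show i + 1 + m - 1 = m + i by omega, choose_symm_add]
    · simp

noncomputable def expDivOneSubCoeff {K : Type*} [Field K] (a b : K) (k : ℕ) : K :=
  ∑ q ∈ antidiagonal k, a ^ q.1 / q.1 ! * (q.1.multichoose q.2 * b ^ q.2)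

section
variable {K : Type*} [RCLike K]

theorem hasSum_pow_div_factorial_mul_multichoose_geometric (u : K) {r : K} (hr : ‖r‖ < 1) (j : ℕ) :
    HasSum (fun m ↦ u ^ j / j ! * (j.multichoose m * r ^ m)) ((u / (1 - r)) ^ j / j !) := by
  rw [show (u / (1 - r)) ^ j / j ! = u ^ j / j ! * (1 - r)⁻¹ ^ j by ring]
  exact (hasSum_multichoose_mul_geometric j hr).mul_left _

theorem summable_pow_div_factorial_mul_multichoose_geometric (u : K) {r : K} (hr : ‖r‖ < 1) :
    Summable fun q : ℕ × ℕ ↦ u ^ q.1 / q.1 ! * (q.1.multichoose q.2 * r ^ q.2) := by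
  have hr' : ‖‖r‖‖ < 1 := by rwa [norm_norm]
  have hrow := hasSum_pow_div_factorial_mul_multichoose_geometric ‖u‖ hr'
  refine Summable.of_norm ?_
  simp only [norm_mul, norm_div, norm_pow, RCLike.norm_natCast]
  refine (summable_prod_of_nonneg fun _ ↦ by positivity).2 ⟨fun j ↦ (hrow j).summable, ?_⟩
  simpa only [(hrow _).tsum_eq] using Real.summable_pow_div_factorial _

theorem hasSum_exp_div_one_sub (u : K) {r : K} (hr : ‖r‖ < 1) :
    HasSum (fun q : ℕ × ℕ ↦ u ^ q.1 / q.1 ! * (q.1.multichoose q.2 * r ^ q.2))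
      (NormedSpace.exp (u / (1 - r))) := by
  have h := (summable_pow_div_factorial_mul_multichoose_geometric u hr).hasSum
  rwa [(h.prod_fiberwise (hasSum_pow_div_factorial_mul_multichoose_geometric u hr)).unique
    (NormedSpace.expSeries_div_hasSum_exp _)] at h

theorem hasSum_exp_mul_div_one_sub_mul (a b x : K) (h : ‖b * x‖ < 1) :
    HasSum (fun k ↦ x ^ k * expDivOneSubCoeff a b k) (NormedSpace.exp (a * x / (1 - b * x))) := by
  convert (hasSum_exp_div_one_sub (a * x) h).sum_antidiagonal using 2 with k
  rw [expDivOneSubCoeff, mul_sum]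
  refine sum_congr rfl fun q hq ↦ ?_
  rw [← mem_antidiagonal.1 hq]
  ring

end

theorem expDivOneSubCoeff_zero {K : Type*} [Field K] (a b : K) : expDivOneSubCoeff a b 0 = 1 := by
  simp [expDivOneSubCoeff]

theorem expDivOneSubCoeff_succ {K : Type*} [Field K] (a b : K) (n : ℕ) :
    expDivOneSubCoeff a b (n + 1) =
      ∑ i ∈ range (n + 1), a ^ (i + 1) / (i + 1)! * (n.choose i * b ^ (n - i)) := by
  rw [expDivOneSubCoeff, Nat.sum_antidiagonal_eq_sum_range_succ
    (fun j m ↦ a ^ j / j ! * (j.multichoose m * b ^ m)), sum_range_succ']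
  simp only [Nat.sub_zero, multichoose_zero_succ, Nat.cast_zero, zero_mul, mul_zero, add_zero]
  refine sum_congr rfl fun i hi ↦ ?_
  have hin : i ≤ n := Nat.lt_succ_iff.1 (mem_range.1 hi)
  rw [show n + 1 - (i + 1) = n - i by omega, multichoose_eq,
    show i + 1 + (n - i) - 1 = n by omega, choose_symm hin]

theorem polyaAeppliQ_eq_expDivOneSubCoeff (t p : ℝ) (k : ℕ) :
    polyaAeppliQ t p k = expDivOneSubCoeff (t / (1 - p)) (p / (1 - p)) k := by
  rcases k with _ | n
  · simp [polyaAeppliQ, expDivOneSubCoeff_zero]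
  rw [polyaAeppliQ, if_neg n.succ_ne_zero, expDivOneSubCoeff_succ, mul_sum,
    ← Ico_add_one_right_eq_Icc, sum_Ico_eq_sum_range, Nat.add_sub_cancel]
  refine sum_congr rfl fun i hi ↦ ?_
  have hin : i ≤ n := Nat.lt_succ_iff.1 (mem_range.1 hi)
  rw [add_comm 1 i, Nat.add_sub_cancel, Nat.add_sub_add_right, Nat.add_sub_cancel,
    show n + 1 = (i + 1) + (n - i) by omega, pow_add, div_pow, div_pow]
  generalize 1 - p = c
  ring

theorem norm_div_one_sub_mul_lt_one {p : ℝ} (hp0 : 0 ≤ p) (hp1 : p < 1) {w : ℂ}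
    (hw : p = 0 ∨ ‖w‖ < (1 - p) / p) : ‖((p / (1 - p) : ℝ) : ℂ) * w‖ < 1 := by
  rcases hw with rfl | hw
  · simp
  have hp : 0 < p := hp0.lt_of_ne' fun h ↦ by simp [h] at hw; linarith [norm_nonneg w]
  have h1p : 0 < 1 - p := sub_pos.2 hp1
  have hq : 0 < p / (1 - p) := div_pos hp h1p
  calc ‖((p / (1 - p) : ℝ) : ℂ) * w‖ = p / (1 - p) * ‖w‖ := by
        rw [norm_mul, Complex.norm_real, Real.norm_of_nonneg hq.le]
    _ < p / (1 - p) * ((1 - p) / p) := mul_lt_mul_of_pos_left hw hq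
    _ = 1 := by field_simp [h1p.ne']

theorem polyaAeppli_factorial_moment_expansion_general (t p : ℝ) (hp0 : 0 ≤ p) (hp1 : p < 1)
    (z : ℂ) (hz : p = 0 ∨ ‖z - 1‖ < (1 - p) / p) :
    Complex.exp ((t : ℂ) * (z - 1) / (1 - (p : ℂ) * z)) =
      ∑' k : ℕ, (z - 1) ^ k * (polyaAeppliQ t p k : ℂ) := by
  have h1p : (1 : ℂ) - p ≠ 0 := by exact_mod_cast (sub_pos.2 hp1).ne'
  have hexp : (t : ℂ) * (z - 1) / (1 - p * z) =
      ((t / (1 - p) : ℝ) : ℂ) * (z - 1) / (1 - ((p / (1 - p) : ℝ) : ℂ) * (z - 1)) := by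
    push_cast
    field_simp
    ring
  rw [hexp, Complex.exp_eq_exp_ℂ,
    (hasSum_exp_mul_div_one_sub_mul _ _ _ (norm_div_one_sub_mul_lt_one hp0 hp1 hz)).tsum_eq.symm]
  congr! 2 with k
  rw [polyaAeppliQ_eq_expDivOneSubCoeff]
  simp [expDivOneSubCoeff]

theorem polyaAeppli_factorial_moment_expansion (t p : ℝ) (ht : 0 < t) (hp0 : 0 ≤ p) (hp1 : p < 1)
    (z : ℂ) (hz : p = 0 ∨ ‖z - 1‖ < (1 - p) / p) :
    Complex.exp ((t : ℂ) * (z - 1) / (1 - (p : ℂ) * z)) =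
      ∑' k : ℕ, (z - 1) ^ k * (polyaAeppliQ t p k : ℂ) :=
  polyaAeppli_factorial_moment_expansion_general t p hp0 hp1 z hz
end

section
/- For real $x$ and $y,z$ with $|y|+|z|<1$: $\sum_{r=2}^{\infty}\sum_{j=2}^{r}\sum_{s=1}^{j-1}\binom{j-1}{s-1}\frac{x^s}{s!}\binom{r-1}{j-1} y^{j-s} z^{r-j} = \exp\frac{x}{1-y-z} - \exp\frac{x}{1-z}$. -/
/-!
Summing first over `r`, the negative binomial series gives `(1 - z)^{-j}`; summing next over
`j > s`, the same series in `t = y / (1 - z)`, minus its `j = s` term, gives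
`(1 - y - z)^{-s} - (1 - z)^{-s}`; finally `∑ x^s / s!` times this is the difference of
exponentials. The interchanges of summation are justified by running the same computation with
`|x|, |y|, |z|`, which shows absolute convergence.
-/

open Finset

section Fubini

variable {α β γ δ : Type*}

lemma HasSum.of_prod_fiberwise [AddCommMonoid α] [TopologicalSpace α] [ContinuousAdd α]
    [T3Space α] {f : β × γ → α} {g : β → α} {a : α} (hf : Summable f)
    (hg : ∀ b, HasSum (fun c => f (b, c)) (g b)) (ha : HasSum g a) : HasSum f a := by
  rw [ha.unique (hf.hasSum.prod_fiberwise hg)]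
  exact hf.hasSum

lemma hasSum_prod_of_nonneg {f : β × γ → ℝ} {g : β → ℝ} {a : ℝ} (hf : 0 ≤ f)
    (hg : ∀ b, HasSum (fun c => f (b, c)) (g b)) (ha : HasSum g a) : HasSum f a :=
  .of_prod_fiberwise ((summable_prod_of_nonneg hf).2
    ⟨fun b => (hg b).summable, ha.summable.congr fun b => ((hg b).tsum_eq).symm⟩) hg ha

lemma HasSum.of_iterated [NormedAddCommGroup α] [CompleteSpace α] {f : β × γ × δ → α}
    {g : β → γ → α} {k : β → α} {a : α} (hf : Summable f)
    (h₁ : ∀ b c, HasSum (fun d => f (b, c, d)) (g b c)) (h₂ : ∀ b, HasSum (g b) (k b))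
    (h₃ : HasSum k a) : HasSum f a :=
  .of_prod_fiberwise hf (fun b => .of_prod_fiberwise (hf.prod_factor b) (h₁ b) (h₂ b)) h₃

lemma summable_of_iterated_of_nonneg {f : β × γ × δ → ℝ} {g : β → γ → ℝ} {k : β → ℝ}
    {a : ℝ} (hf : 0 ≤ f) (h₁ : ∀ b c, HasSum (fun d => f (b, c, d)) (g b c))
    (h₂ : ∀ b, HasSum (g b) (k b)) (h₃ : HasSum k a) : Summable f :=
  (hasSum_prod_of_nonneg hf (fun b => hasSum_prod_of_nonneg (fun _ => hf _) (h₁ b) (h₂ b))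
    h₃).summable

end Fubini

lemma hasSum_pow_succ_div_factorial (u : ℝ) :
    HasSum (fun n : ℕ => u ^ (n + 1) / (n + 1).factorial) (Real.exp u - 1) := by
  have hexp := NormedSpace.expSeries_div_hasSum_exp u
  rw [← Real.exp_eq_exp_ℝ] at hexp
  simpa using (hasSum_nat_add_iff' 1).mpr hexp

section Geometric

variable {y z : ℝ}

lemma hasSum_choose_mul_pow_div_pow (h : |y| + |z| < 1) (k : ℕ) :
    HasSum (fun m : ℕ => (m + k).choose k * y ^ m / (1 - z) ^ (m + k + 1))
      (1 / (1 - y - z) ^ (k + 1)) := by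
  have hz : 0 < 1 - z := by linarith [le_abs_self z, abs_nonneg y]
  have ht : ‖y / (1 - z)‖ < 1 := by
    rw [Real.norm_eq_abs, abs_div, abs_of_pos hz, div_lt_one hz]
    linarith [le_abs_self z]
  have hsum : 1 / (1 - y - z) ^ (k + 1) = 1 / (1 - y / (1 - z)) ^ (k + 1) / (1 - z) ^ (k + 1) := by
    rw [one_sub_div hz.ne', sub_right_comm, div_pow, one_div_div,
      div_div_cancel_left' (pow_ne_zero _ hz.ne'), one_div]
  rw [hsum]
  refine ((hasSum_choose_mul_geometric_of_norm_lt_one k ht).div_const _).congr_fun fun m => ?_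
  rw [div_pow, pow_add _ (m + k), pow_add _ m]
  field_simp
  ring

lemma hasSum_choose_mul_pow_succ_div_pow (h : |y| + |z| < 1) (k : ℕ) :
    HasSum (fun m : ℕ => (m + 1 + k).choose k * y ^ (m + 1) / (1 - z) ^ (m + 1 + k + 1))
      (1 / (1 - y - z) ^ (k + 1) - 1 / (1 - z) ^ (k + 1)) := by
  simpa using (hasSum_nat_add_iff' 1).mpr (hasSum_choose_mul_pow_div_pow h k)

end Geometric

noncomputable def tripleSummand (x y z : ℝ) (p : ℕ × ℕ × ℕ) : ℝ :=
  ((p.2.1 - 1).choose (p.2.2 - 1) : ℝ) * x ^ p.2.2 / p.2.2.factorial *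
    ((p.1 - 1).choose (p.2.1 - 1) : ℝ) * y ^ (p.2.1 - p.2.2) * z ^ (p.1 - p.2.1)

-- `(s - 1, j - s - 1, r - j) ↦ (r, j, s)`, a bijection onto the support of the triple sum.
def summandIndex (p : ℕ × ℕ × ℕ) : ℕ × ℕ × ℕ :=
  (p.1 + p.2.1 + p.2.2 + 2, p.1 + p.2.1 + 2, p.1 + 1)

lemma summandIndex_injective : Function.Injective summandIndex := by
  rintro ⟨a, b, c⟩ ⟨a', b', c'⟩ h
  simp only [summandIndex, Prod.ext_iff] at h ⊢
  omega

lemma mem_range_summandIndex {r j s : ℕ} :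
    (r, j, s) ∈ Set.range summandIndex ↔ 1 ≤ s ∧ s < j ∧ j ≤ r := by
  constructor
  · rintro ⟨⟨a, b, c⟩, h⟩
    simp only [summandIndex, Prod.ext_iff] at h
    omega
  · rintro ⟨hs, hsj, hjr⟩
    exact ⟨(s - 1, j - s - 1, r - j), by simp only [summandIndex, Prod.ext_iff]; omega⟩

lemma tripleSummand_summandIndex (x y z : ℝ) (a b c : ℕ) :
    tripleSummand x y z (summandIndex (a, b, c)) =
      x ^ (a + 1) / (a + 1).factorial * ((b + 1 + a).choose a * y ^ (b + 1)) *
        ((c + (b + 1 + a)).choose (b + 1 + a) * z ^ c) := by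
  simp only [tripleSummand, summandIndex]
  rw [show a + b + 2 - 1 = b + 1 + a by omega, show a + 1 - 1 = a by omega,
    show a + b + c + 2 - 1 = c + (b + 1 + a) by omega, show a + b + 2 - (a + 1) = b + 1 by omega,
    show a + b + c + 2 - (a + b + 2) = c by omega]
  ring

lemma abs_tripleSummand (x y z : ℝ) (p : ℕ × ℕ × ℕ) :
    |tripleSummand x y z p| = tripleSummand |x| |y| |z| p := by
  simp [tripleSummand, abs_mul, abs_div, abs_pow]

lemma hasSum_tripleSummand_r (x y : ℝ) {z : ℝ} (hz : |z| < 1) (a b : ℕ) :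
    HasSum (fun c => tripleSummand x y z (summandIndex (a, b, c)))
      (x ^ (a + 1) / (a + 1).factorial * ((b + 1 + a).choose a * y ^ (b + 1)) *
        (1 / (1 - z) ^ (b + 1 + a + 1))) := by
  have hz' : ‖z‖ < 1 := by rwa [Real.norm_eq_abs]
  refine ((hasSum_choose_mul_geometric_of_norm_lt_one (b + 1 + a) hz').mul_left _).congr_fun
    fun c => ?_
  rw [tripleSummand_summandIndex]

lemma hasSum_tripleSummand_j (x : ℝ) {y z : ℝ} (h : |y| + |z| < 1) (a : ℕ) :
    HasSum (fun b : ℕ => x ^ (a + 1) / (a + 1).factorial * ((b + 1 + a).choose a * y ^ (b + 1)) *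
        (1 / (1 - z) ^ (b + 1 + a + 1)))
      (x ^ (a + 1) / (a + 1).factorial * (1 / (1 - y - z) ^ (a + 1) - 1 / (1 - z) ^ (a + 1))) :=
  ((hasSum_choose_mul_pow_succ_div_pow h a).mul_left _).congr_fun fun b => by ring

lemma hasSum_tripleSummand_s (x y z : ℝ) :
    HasSum (fun a : ℕ =>
        x ^ (a + 1) / (a + 1).factorial * (1 / (1 - y - z) ^ (a + 1) - 1 / (1 - z) ^ (a + 1)))
      (Real.exp (x / (1 - y - z)) - Real.exp (x / (1 - z))) := by
  have hdiff := (hasSum_pow_succ_div_factorial (x / (1 - y - z))).sub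
    (hasSum_pow_succ_div_factorial (x / (1 - z)))
  rw [sub_sub_sub_cancel_right] at hdiff
  exact hdiff.congr_fun fun a => by rw [div_pow, div_pow]; ring

lemma summable_tripleSummand_comp (x : ℝ) {y z : ℝ} (h : |y| + |z| < 1) :
    Summable (tripleSummand x y z ∘ summandIndex) := by
  have h' : |(|y|)| + |(|z|)| < 1 := by rwa [abs_abs, abs_abs]
  have hz : |(|z|)| < 1 := by linarith [abs_nonneg (|y|)]
  refine .of_abs ?_
  simp only [Function.comp_apply, abs_tripleSummand]
  exact summable_of_iterated_of_nonneg (fun p => by simp only [tripleSummand]; positivity)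
    (hasSum_tripleSummand_r |x| |y| hz) (hasSum_tripleSummand_j |x| h')
    (hasSum_tripleSummand_s |x| |y| |z|)

lemma hasSum_tripleSummand_comp (x : ℝ) {y z : ℝ} (h : |y| + |z| < 1) :
    HasSum (tripleSummand x y z ∘ summandIndex)
      (Real.exp (x / (1 - y - z)) - Real.exp (x / (1 - z))) :=
  .of_iterated (summable_tripleSummand_comp x h)
    (hasSum_tripleSummand_r x y (by linarith [abs_nonneg y])) (hasSum_tripleSummand_j x h)
    (hasSum_tripleSummand_s x y z)

lemma sum_Icc_eq_tsum_indicator (x y z : ℝ) (r : ℕ) :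
    ∑ j ∈ Icc 2 r, ∑ s ∈ Icc 1 (j - 1), tripleSummand x y z (r, j, s) =
      ∑' q : ℕ × ℕ, (Set.range summandIndex).indicator (tripleSummand x y z) (r, q) := by
  set T := {q ∈ Icc 2 r ×ˢ Icc 1 r | q.2 < q.1}
  have hT : ∀ q : ℕ × ℕ, q ∈ T ↔ (r, q) ∈ Set.range summandIndex := by
    rintro ⟨j, s⟩
    simp only [T, mem_filter, mem_product, mem_Icc, mem_range_summandIndex]
    omega
  have hT' : ∀ q : ℕ × ℕ, q ∈ T ↔ q.1 ∈ Icc 2 r ∧ q.2 ∈ Icc 1 (q.1 - 1) := by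
    rintro ⟨j, s⟩
    simp only [T, mem_filter, mem_product, mem_Icc]
    omega
  rw [tsum_eq_sum fun q hq => Set.indicator_of_notMem (mt (hT q).2 hq) _,
    sum_finset_product T (Icc 2 r) (fun j => Icc 1 (j - 1)) hT']
  exact sum_congr rfl fun j hj => sum_congr rfl fun s hs =>
    (Set.indicator_of_mem ((hT _).1 ((hT' _).2 ⟨hj, hs⟩)) _).symm

theorem triple_sum_generating_identity (x y z : ℝ) (h : |y| + |z| < 1) :
    ∑' r : ℕ,
        ∑ j ∈ Finset.Icc 2 r, ∑ s ∈ Finset.Icc 1 (j - 1),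
          (Nat.choose (j - 1) (s - 1) : ℝ) * x ^ s / (Nat.factorial s) *
            (Nat.choose (r - 1) (j - 1) : ℝ) * y ^ (j - s) * z ^ (r - j) =
      Real.exp (x / (1 - y - z)) - Real.exp (x / (1 - z)) := by
  have hS := hasSum_subtype_iff_indicator.mp
    (summandIndex_injective.hasSum_range_iff.mpr (hasSum_tripleSummand_comp x h))
  refine (tsum_congr fun r => ?_).trans
    (hS.prod_fiberwise fun r => (hS.summable.prod_factor r).hasSum).tsum_eq
  exact sum_Icc_eq_tsum_indicator x y z r
end

section
/- Let $(a_n)_{n\ge1}$ be a sequence of nonnegative reals and let $\Delta\ge0$ be an integer and $c\ge0$ a real such that $a_{k+\Delta+\ell}\ge a_k + a_\ell - c$ for all positive integers $k,\ell$. Then the limit $\lim_{n\to\infty} a_n/n$ exists (possibly $+\infty$); in particular $\liminf_{n\to\infty} a_n/n \ge \limsup_{n\to\infty} a_n/n$. -/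
/-!
Writing `n = q (m + Δ) + r` with `1 ≤ r ≤ m + Δ` and iterating the hypothesis gives
`a n ≥ q (a m - c)`, so `liminf a n / n ≥ (a m - c) / (m + Δ)` for every `m`. Conversely, if this
liminf is a finite `M`, then `a n ≤ M (n + Δ) + c` for all `n`, whence `limsup a n / n ≤ M`.
-/

open Filter

def AlmostSuperadditive (a : ℕ → ℝ) (Δ : ℕ) (c : ℝ) : Prop :=
  ∀ k l : ℕ, 1 ≤ k → 1 ≤ l → a k + a l - c ≤ a (k + Δ + l)

namespace AlmostSuperadditive

variable {a : ℕ → ℝ} {Δ : ℕ} {c : ℝ}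

theorem mul_add_le (h : AlmostSuperadditive a Δ c) {m : ℕ} (hm : 1 ≤ m) (q : ℕ) {r : ℕ}
    (hr : 1 ≤ r) : q * (a m - c) + a r ≤ a (q * (m + Δ) + r) := by
  induction q with
  | zero => simp
  | succ q ih =>
    have step := h m (q * (m + Δ) + r) hm (by omega)
    rw [show (q + 1) * (m + Δ) + r = m + Δ + (q * (m + Δ) + r) by ring]
    push_cast
    linarith

theorem div_mul_sub_le (h : AlmostSuperadditive a Δ c) (ha : ∀ n, 0 ≤ a n) {m : ℕ} (hm : 1 ≤ m)
    (hK : 0 ≤ a m - c) {n : ℕ} (hn : 1 ≤ n) :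
    (a m - c) / (m + Δ) * n - (a m - c) ≤ a n := by
  set K := a m - c
  have hP : 0 < m + Δ := by omega
  obtain ⟨q, r, hr, hrP, rfl⟩ : ∃ q r, 1 ≤ r ∧ r ≤ m + Δ ∧ n = q * (m + Δ) + r :=
    ⟨(n - 1) / (m + Δ), (n - 1) % (m + Δ) + 1, by omega, Nat.mod_lt _ hP,
      by have := Nat.div_add_mod' (n - 1) (m + Δ); omega⟩
  have hPr : (0 : ℝ) < m + Δ := by exact_mod_cast hP
  have hrK : K / (m + Δ) * r ≤ K := by
    rw [div_mul_eq_mul_div, div_le_iff₀ hPr]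
    exact mul_le_mul_of_nonneg_left (by exact_mod_cast hrP) hK
  calc K / (m + Δ) * ((q * (m + Δ) + r : ℕ) : ℝ) - K
      = q * K + (K / (m + Δ) * r - K) := by push_cast; field_simp; ring
    _ ≤ q * K + a r := by linarith [ha r]
    _ ≤ a (q * (m + Δ) + r) := h.mul_add_le hm q hr

theorem le_liminf (h : AlmostSuperadditive a Δ c) (ha : ∀ n, 0 ≤ a n) {m : ℕ} (hm : 1 ≤ m) :
    (((a m - c) / (m + Δ) : ℝ) : EReal) ≤ liminf (fun n : ℕ => ((a n / n : ℝ) : EReal)) atTop := by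
  rcases lt_or_ge (a m - c) 0 with hK | hK
  · have hd : (a m - c) / (m + Δ) < 0 := div_neg_of_neg_of_pos hK (by positivity)
    refine le_liminf_of_le (h := Eventually.of_forall fun n => ?_)
    exact EReal.coe_le_coe_iff.2 (hd.le.trans (div_nonneg (ha n) n.cast_nonneg))
  · have hlim : Tendsto (fun n : ℕ => (a m - c) / (m + Δ) - (a m - c) / n) atTop
        (nhds ((a m - c) / (m + Δ))) := by
      simpa using tendsto_const_nhds.sub (tendsto_const_div_atTop_nhds_zero_nat (a m - c))
    rw [← (EReal.tendsto_coe.2 hlim).liminf_eq]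
    refine liminf_le_liminf ((eventually_ge_atTop 1).mono fun n hn => ?_)
    have hn' : (0 : ℝ) < n := by exact_mod_cast hn
    rw [EReal.coe_le_coe_iff, le_div_iff₀ hn', sub_mul, div_mul_cancel₀ _ hn'.ne']
    exact h.div_mul_sub_le ha hm hK hn

theorem limsup_le_liminf (h : AlmostSuperadditive a Δ c) (ha : ∀ n, 0 ≤ a n) :
    limsup (fun n : ℕ => ((a n / n : ℝ) : EReal)) atTop ≤
      liminf (fun n : ℕ => ((a n / n : ℝ) : EReal)) atTop := by
  generalize hM : liminf (fun n : ℕ => ((a n / n : ℝ) : EReal)) atTop = M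
  have hM0 : 0 ≤ M := hM ▸ le_liminf_of_le (h := Eventually.of_forall fun n =>
    EReal.coe_nonneg.2 (div_nonneg (ha n) n.cast_nonneg))
  have hdM : ∀ n, 1 ≤ n → (((a n - c) / (n + Δ) : ℝ) : EReal) ≤ M := fun n hn =>
    hM ▸ h.le_liminf ha hn
  induction M using EReal.rec with
  | bot => exact absurd hM0 (by simp)
  | top => exact le_top
  | coe x =>
    have hub : ∀ n, 1 ≤ n → a n / n ≤ x + (x * Δ + c) / n := fun n hn => by
      have hd := EReal.coe_le_coe_iff.1 (hdM n hn)
      have hn' : (0 : ℝ) < n := by exact_mod_cast hn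
      rw [div_le_iff₀ (by positivity)] at hd
      rw [div_le_iff₀ hn', add_mul, div_mul_cancel₀ _ hn'.ne']
      linarith
    have hlim : Tendsto (fun n : ℕ => x + (x * Δ + c) / n) atTop (nhds x) := by
      simpa using tendsto_const_nhds.add (tendsto_const_div_atTop_nhds_zero_nat (x * Δ + c))
    rw [← (EReal.tendsto_coe.2 hlim).limsup_eq]
    exact limsup_le_limsup ((eventually_ge_atTop 1).mono fun n hn =>
      EReal.coe_le_coe_iff.2 (hub n hn))

end AlmostSuperadditive

theorem almost_superadditive_limit_general (a : ℕ → ℝ) (ha : ∀ n, 0 ≤ a n) (Δ : ℕ) (c : ℝ)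
    (hsup : ∀ k l : ℕ, 1 ≤ k → 1 ≤ l → a k + a l - c ≤ a (k + Δ + l)) :
    (∃ L : EReal, Tendsto (fun n : ℕ => ((a n / n : ℝ) : EReal)) atTop (nhds L)) ∧
      Filter.limsup (fun n : ℕ => ((a n / n : ℝ) : EReal)) atTop ≤
        Filter.liminf (fun n : ℕ => ((a n / n : ℝ) : EReal)) atTop := by
  have h : AlmostSuperadditive a Δ c := hsup
  have hle := h.limsup_le_liminf ha
  exact ⟨⟨_, tendsto_of_le_liminf_of_limsup_le le_rfl hle⟩, hle⟩

theorem almost_superadditive_limit (a : ℕ → ℝ) (ha : ∀ n, 0 ≤ a n) (Δ : ℕ) (c : ℝ) (hc : 0 ≤ c)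
    (hsup : ∀ k l : ℕ, 1 ≤ k → 1 ≤ l → a k + a l - c ≤ a (k + Δ + l)) :
    (∃ L : EReal, Tendsto (fun n : ℕ => ((a n / n : ℝ) : EReal)) atTop (nhds L)) ∧
      Filter.limsup (fun n : ℕ => ((a n / n : ℝ) : EReal)) atTop ≤
        Filter.liminf (fun n : ℕ => ((a n / n : ℝ) : EReal)) atTop :=
  almost_superadditive_limit_general a ha Δ c hsup
end

section
/- Let $(T,\mu)$ be $\phi$-mixing with respect to a finite generating partition $\mathcal{A}$ and suppose all cylinders have positive measure. Then there exists $\eta\in(0,1)$ such that $\mu(A)\le\eta^{|A|}$ for all cylinders $A$, where $|A|=n$ when $A$ is an $n$-cylinder. -/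
open Filter MeasureTheory

/-!
Let `β < 1` bound the measures of all `1`-cylinders and pick a gap `k` with
`θ := (1 + |φ k|) β < 1`. Fixing only the coordinates `0, r, 2r, …` with `r = k + 1`, the mixing
inequality splits off one coordinate at a time at the cost of a factor `1 + |φ k|`, so such a
sparse cylinder with `m` fixed coordinates has measure at most `θ ^ m`. An `n`-cylinder lies in
the sparse cylinder with `⌈n / r⌉` coordinates, whence `μ(A) ≤ (θ ^ (1 / r)) ^ n`.
-/

theorem mul_lt_of_lt_add_sub_one_div {i n r : ℕ} (hr : 0 < r) (hi : i < (n + r - 1) / r) :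
    i * r < n := by
  have := (Nat.le_div_iff_mul_le hr).mp hi
  rw [Nat.succ_mul] at this
  omega

theorem le_add_sub_one_div_mul {r : ℕ} (hr : 0 < r) (n : ℕ) : n ≤ (n + r - 1) / r * r := by
  have := Nat.div_add_mod' (n + r - 1) r
  have := Nat.mod_lt (n + r - 1) hr
  omega

section Coding

variable {Ω α : Type*} (c : Ω → ℕ → α)

def codingCylinder (n : ℕ) (s : Fin n → α) : Set Ω :=
  {y | ∀ j : Fin n, c y j = s j}

def sparseCodingCylinder (r m : ℕ) (a : Fin m → α) : Set Ω :=
  {y | ∀ i : Fin m, c y (i * r) = a i}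

variable {c} {T : Ω → Ω}

theorem coding_iterate_apply (hshift : ∀ y j, c (T y) j = c y (j + 1)) (n : ℕ) (y : Ω) (i : ℕ) :
    c (T^[n] y) i = c y (i + n) := by
  induction n generalizing y with
  | zero => rfl
  | succ n ih => rw [Function.iterate_succ_apply, ih, hshift, Nat.add_assoc]

theorem sparseCodingCylinder_succ (hshift : ∀ y j, c (T y) j = c y (j + 1)) (r m : ℕ)
    (a : Fin (m + 1) → α) :
    sparseCodingCylinder c r (m + 1) a =
      {y | c y 0 = a 0} ∩ T^[r] ⁻¹' sparseCodingCylinder c r m (Fin.tail a) := by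
  ext y
  simp only [sparseCodingCylinder, Set.mem_ofPred_eq, Set.mem_inter_iff, Set.mem_preimage,
    Fin.forall_fin_succ, Fin.val_zero, zero_mul, Fin.val_succ, add_one_mul,
    coding_iterate_apply hshift, Fin.tail]

theorem exists_codingCylinder_subset_sparseCodingCylinder {r : ℕ} (hr : 0 < r) (n : ℕ)
    (s : Fin n → α) :
    ∃ a, codingCylinder c n s ⊆ sparseCodingCylinder c r ((n + r - 1) / r) a :=
  ⟨fun i => s ⟨i * r, mul_lt_of_lt_add_sub_one_div hr i.2⟩, fun _ hy i => hy ⟨i * r, _⟩⟩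

variable [MeasurableSpace Ω] {μ : Measure Ω}

theorem exists_forall_measure_codingCylinder_le_pow [IsFiniteMeasure μ] {r : ℕ} (hr : 0 < r)
    {θ : ℝ} (hθ0 : 0 < θ) (hθ1 : θ < 1)
    (hsparse : ∀ m a, (μ (sparseCodingCylinder c r m a)).toReal ≤ θ ^ m) :
    ∃ η : ℝ, 0 < η ∧ η < 1 ∧ ∀ n s, (μ (codingCylinder c n s)).toReal ≤ η ^ n := by
  refine ⟨θ ^ (r⁻¹ : ℝ), by positivity, Real.rpow_lt_one hθ0.le hθ1 (by positivity), ?_⟩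
  intro n s
  obtain ⟨a, hsub⟩ := exists_codingCylinder_subset_sparseCodingCylinder (c := c) hr n s
  calc (μ (codingCylinder c n s)).toReal
      ≤ (μ (sparseCodingCylinder c r ((n + r - 1) / r) a)).toReal :=
        ENNReal.toReal_mono (measure_ne_top μ _) (measure_mono hsub)
    _ ≤ ((θ ^ (r⁻¹ : ℝ)) ^ r) ^ ((n + r - 1) / r) := by
        rw [Real.rpow_inv_natCast_pow hθ0.le hr.ne']
        exact hsparse _ a
    _ ≤ (θ ^ (r⁻¹ : ℝ)) ^ n := by
        rw [← pow_mul']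
        exact pow_le_pow_of_le_one (by positivity)
          (Real.rpow_le_one hθ0.le hθ1.le (by positivity)) (le_add_sub_one_div_mul hr n)

variable [MeasurableSpace α] [MeasurableSingletonClass α]

theorem measurableSet_setOf_forall_apply_mul_eq (r m : ℕ) (a : Fin m → α) :
    MeasurableSet {x : ℕ → α | ∀ i : Fin m, x (i * r) = a i} := by
  simp only [Set.ofPred_forall]
  exact .iInter fun i =>
    (measurableSet_singleton (a i)).preimage (measurable_pi_apply (i * r : ℕ))

theorem measure_sparseCodingCylinder_le [IsProbabilityMeasure μ]
    (hshift : ∀ y j, c (T y) j = c y (j + 1)) {r : ℕ} {C β : ℝ} (hC : 0 ≤ C) (hβ : 0 ≤ β)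
    (hone : ∀ a, (μ {y | c y 0 = a}).toReal ≤ β)
    (hmix : ∀ a (S : Set (ℕ → α)), MeasurableSet S →
      (μ ({y | c y 0 = a} ∩ T^[r] ⁻¹' (c ⁻¹' S))).toReal ≤
        C * (μ {y | c y 0 = a}).toReal * (μ (c ⁻¹' S)).toReal)
    (m : ℕ) (a : Fin m → α) :
    (μ (sparseCodingCylinder c r m a)).toReal ≤ (C * β) ^ m := by
  induction m with
  | zero => simp [sparseCodingCylinder]
  | succ m ih =>
    rw [sparseCodingCylinder_succ hshift]
    calc _ ≤ C * (μ {y | c y 0 = a 0}).toReal *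
            (μ (sparseCodingCylinder c r m (Fin.tail a))).toReal :=
          hmix (a 0) _ (measurableSet_setOf_forall_apply_mul_eq r m (Fin.tail a))
      _ ≤ C * β * (C * β) ^ m := by
          gcongr
          · exact hone _
          · exact ih _
      _ = (C * β) ^ (m + 1) := by ring

end Coding

theorem exists_one_add_abs_mul_lt_one {φ : ℕ → ℝ} (hφ : Tendsto φ atTop (nhds 0)) {β : ℝ}
    (hβ0 : 0 < β) (hβ1 : β < 1) : ∃ k, (1 + |φ k|) * β < 1 := by
  have habs : Tendsto (fun k => |φ k|) atTop (nhds 0) := by simpa using hφ.abs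
  obtain ⟨k, hk⟩ := (habs.eventually (gt_mem_nhds (div_pos (sub_pos.2 hβ1) hβ0))).exists
  refine ⟨k, ?_⟩
  rw [lt_div_iff₀ hβ0] at hk
  linarith

theorem le_one_add_abs_mul_of_abs_sub_le {x u v ε : ℝ} (huv : 0 ≤ u * v)
    (h : |x - u * v| ≤ ε * u * v) : x ≤ (1 + |ε|) * u * v := by
  have := (abs_le.mp h).2
  nlinarith [le_abs_self ε]

theorem exists_forall_le_lt_one {ι : Type*} [Finite ι] (f : ι → ℝ) (hf : ∀ i, f i < 1) :
    ∃ β, 0 < β ∧ β < 1 ∧ ∀ i, f i ≤ β := by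
  cases isEmpty_or_nonempty ι with
  | inl _ => exact ⟨1 / 2, by norm_num, by norm_num, isEmptyElim⟩
  | inr _ =>
    obtain ⟨i₀, hi₀⟩ := Finite.exists_max f
    exact ⟨max (f i₀) (1 / 2), by positivity, max_lt (hf i₀) (by norm_num),
      fun i => (hi₀ i).trans (le_max_left _ _)⟩

theorem phi_mixing_cylinder_exponential_decay_general
    {Ω α : Type*} [MeasurableSpace Ω] [MeasurableSpace α] [MeasurableSingletonClass α]
    [Finite α]
    (μ : Measure Ω) [IsProbabilityMeasure μ] (T : Ω → Ω)
    (c : Ω → ℕ → α)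
    (hshift : ∀ y j, c (T y) j = c y (j + 1))
    (φ : ℕ → ℝ)
    (hφlim : Tendsto φ atTop (nhds 0))
    (hmix : ∀ (n k : ℕ) (S : Set (Fin n → α)) (S' : Set (ℕ → α)),
      MeasurableSet S → MeasurableSet S' →
      |(μ ({y | (fun j : Fin n => c y j) ∈ S} ∩ (T^[k + n]) ⁻¹' (c ⁻¹' S'))).toReal -
          (μ {y | (fun j : Fin n => c y j) ∈ S}).toReal * (μ (c ⁻¹' S')).toReal| ≤
        φ k * (μ {y | (fun j : Fin n => c y j) ∈ S}).toReal * (μ (c ⁻¹' S')).toReal)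
    -- μ is not concentrated on a single cylinder of each length
    (hnc : ∀ (n : ℕ) (s : Fin n → α), 1 ≤ n → μ {y | ∀ j : Fin n, c y j = s j} < 1) :
    ∃ η : ℝ, 0 < η ∧ η < 1 ∧ ∀ (n : ℕ) (s : Fin n → α),
      (μ {y | ∀ j : Fin n, c y j = s j}).toReal ≤ η ^ n := by
  have hone_lt (a : α) : (μ {y | c y 0 = a}).toReal < 1 :=
    ENNReal.toReal_lt_of_lt_ofReal (by simpa using hnc 1 (fun _ => a) le_rfl)
  obtain ⟨β, hβ0, hβ1, hone⟩ := exists_forall_le_lt_one _ hone_lt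
  obtain ⟨k, hk⟩ := exists_one_add_abs_mul_lt_one hφlim hβ0 hβ1
  refine exists_forall_measure_codingCylinder_le_pow k.succ_pos (by positivity) hk
    (measure_sparseCodingCylinder_le hshift (by positivity) hβ0.le hone fun a S hS => ?_)
  have hS₁ : MeasurableSet {f : Fin 1 → α | f 0 = a} :=
    (measurableSet_singleton a).preimage (measurable_pi_apply 0)
  exact le_one_add_abs_mul_of_abs_sub_le (by positivity) (hmix 1 k _ S hS₁ hS)

/-- For a `φ`-mixing system with respect to a finite generating partition (encoded by the
symbolic coding `c`), all of whose cylinders have positive measure and none of which has full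
measure, the measures of `n`-cylinders decay exponentially: there is `η ∈ (0,1)` with
`μ(A) ≤ η^n` for every `n`-cylinder `A`. -/
theorem phi_mixing_cylinder_exponential_decay
    {Ω α : Type*} [MeasurableSpace Ω] [MeasurableSpace α] [MeasurableSingletonClass α]
    [Finite α]
    (μ : Measure Ω) [IsProbabilityMeasure μ] (T : Ω → Ω)
    (hT : MeasurePreserving T μ μ)
    (c : Ω → ℕ → α) (hc : Measurable c)
    (hshift : ∀ y j, c (T y) j = c y (j + 1))
    (hgen : Function.Injective c)
    (φ : ℕ → ℝ) (hφ0 : ∀ k, 0 ≤ φ k) (hφmono : Antitone φ)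
    (hφlim : Tendsto φ atTop (nhds 0))
    (hmix : ∀ (n k : ℕ) (S : Set (Fin n → α)) (S' : Set (ℕ → α)),
      MeasurableSet S → MeasurableSet S' →
      |(μ ({y | (fun j : Fin n => c y j) ∈ S} ∩ (T^[k + n]) ⁻¹' (c ⁻¹' S'))).toReal -
          (μ {y | (fun j : Fin n => c y j) ∈ S}).toReal * (μ (c ⁻¹' S')).toReal| ≤
        φ k * (μ {y | (fun j : Fin n => c y j) ∈ S}).toReal * (μ (c ⁻¹' S')).toReal)
    -- every nonempty cylinder has positive measure
    (hpos : ∀ (n : ℕ) (s : Fin n → α), {y | ∀ j : Fin n, c y j = s j}.Nonempty →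
      0 < μ {y | ∀ j : Fin n, c y j = s j})
    -- μ is not concentrated on a single cylinder of each length
    (hnc : ∀ (n : ℕ) (s : Fin n → α), 1 ≤ n → μ {y | ∀ j : Fin n, c y j = s j} < 1) :
    ∃ η : ℝ, 0 < η ∧ η < 1 ∧ ∀ (n : ℕ) (s : Fin n → α),
      (μ {y | ∀ j : Fin n, c y j = s j}).toReal ≤ η ^ n :=
  phi_mixing_cylinder_exponential_decay_general μ T c hshift φ hφlim hmix hnc
end

section
/- Let $(T,\mu)$ be $(\phi,f)$-mixing. Then for all $r>1$, sets $W_i\subset\Omega$ that are unions of $n_i$-cylinders ($i=1,\dots,r$), and all vectors $1\le v_1<v_2<\cdots<v_r$ with $v_{i+1}-v_i\ge f(n_i)+n_i$ for $i=1,\dots,r-1$, one has $\left|\frac{\mu\left(\bigcap_{i=1}^r T^{-v_i}W_i\right)}{\prod_{i=1}^r\mu(W_i)}-1\right|\le (1+\phi(d))^r - 1$, where $d=\min_i(v_{i+1}-v_i-n_i)$. -/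
open MeasureTheory

/-! Peel the sets off from the front. The tail sets `B j = ⋂_{i ≥ j} T^{-(v i - v j)} W i` satisfy
`B j = W j ∩ T^{-(v (j+1) - v j)} B (j+1)`, and `B (j+1)` is measurable for the σ-algebra
generated by the coding `c`, since `T` acts on codings as the shift. Hence `(φ,f)`-mixing gives
`μ (B j) = μ (W j) μ (B (j+1)) (1 ± φ d)`, and these multiplicative errors compound to
`(1 + φ d) ^ r - 1`. Finally `⋂ T^{-v i} W i = T^{-v 0} B 0`, which by invariance of `μ` has
the measure of `B 0`. -/

theorem abs_sub_prod_le_of_abs_sub_mul_le {x : ℝ} (hx : 0 ≤ x) (m : ℕ) (a w : ℕ → ℝ)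
    (hw : ∀ j < m, 0 ≤ w j) (ha : a m = 1)
    (hstep : ∀ j < m, |a j - w j * a (j + 1)| ≤ x * w j * a (j + 1)) :
    |a 0 - ∏ j ∈ Finset.range m, w j| ≤ ((1 + x) ^ m - 1) * ∏ j ∈ Finset.range m, w j := by
  induction m generalizing a w with
  | zero => simp [ha]
  | succ m ih =>
    have ih' := ih (fun j => a (j + 1)) (fun j => w (j + 1)) (fun j hj => hw _ (by omega)) ha
      (fun j hj => hstep _ (by omega))
    rw [Finset.prod_range_succ']
    set P := ∏ j ∈ Finset.range m, w (j + 1)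
    set A := (1 + x) ^ m
    have hw0 : 0 ≤ w 0 := hw 0 (by omega)
    have hA : 1 ≤ A := one_le_pow₀ (by linarith)
    have hP : 0 ≤ P := Finset.prod_nonneg fun j hj => hw _ (by have := Finset.mem_range.mp hj; omega)
    have ha1 : a 1 ≤ A * P := by linarith [(abs_le.mp ih').2]
    calc |a 0 - P * w 0| = |(a 0 - w 0 * a 1) + w 0 * (a 1 - P)| := by congr 1; ring
      _ ≤ |a 0 - w 0 * a 1| + w 0 * |a 1 - P| :=
          (abs_add_le _ _).trans_eq (by rw [abs_mul, abs_of_nonneg hw0])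
      _ ≤ x * w 0 * a 1 + w 0 * ((A - 1) * P) := by gcongr; exact hstep 0 (by omega)
      _ ≤ x * w 0 * (A * P) + w 0 * ((A - 1) * P) := by gcongr
      _ = ((1 + x) ^ (m + 1) - 1) * (P * w 0) := by rw [pow_succ]; ring

section TailSets

variable {Ω : Type*} (T : Ω → Ω) (v : ℕ → ℕ) (W : ℕ → Set Ω) (r : ℕ)

def tailInter (j : ℕ) : Set Ω := ⋂ i ∈ Finset.Ico j r, T^[v i - v j] ⁻¹' W i

variable {T v W r}

theorem biInter_preimage_iterate_eq_preimage {s : Finset ℕ} {m : ℕ} (hm : ∀ i ∈ s, m ≤ v i) :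
    ⋂ i ∈ s, T^[v i] ⁻¹' W i = T^[m] ⁻¹' ⋂ i ∈ s, T^[v i - m] ⁻¹' W i := by
  simp only [Set.preimage_iInter₂, ← Set.preimage_comp, ← Function.iterate_add]
  exact Set.iInter₂_congr fun i hi => by rw [Nat.sub_add_cancel (hm i hi)]

theorem tailInter_self : tailInter T v W r r = Set.univ := by
  simp [tailInter]

theorem tailInter_eq_inter (hv : MonotoneOn v (Set.Iio r)) {j : ℕ} (hj : j < r) :
    tailInter T v W r j = W j ∩ T^[v (j + 1) - v j] ⁻¹' tailInter T v W r (j + 1) := by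
  have hle : ∀ i ∈ Finset.Ico (j + 1) r, v (j + 1) - v j ≤ v i - v j := fun i hi => by
    obtain ⟨hji, hir⟩ := Finset.mem_Ico.mp hi
    exact Nat.sub_le_sub_right (hv (show j + 1 < r by omega) hir hji) _
  rw [tailInter, ← Finset.insert_Ico_add_one_left_eq_Ico hj, Finset.set_biInter_insert,
    Nat.sub_self, Function.iterate_zero, Set.preimage_id,
    biInter_preimage_iterate_eq_preimage (v := fun i => v i - v j) hle, tailInter]
  congr 2
  refine Set.iInter₂_congr fun i hi => ?_
  have hj1 : j + 1 < r := by simp only [Finset.mem_Ico] at hi; omega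
  rw [Nat.sub_sub_sub_cancel_right (hv hj (by simpa using hj1) (by simp))]

theorem biInter_range_eq_preimage_tailInter (hv : ∀ i < r, v 0 ≤ v i) :
    ⋂ i ∈ Finset.range r, T^[v i] ⁻¹' W i = T^[v 0] ⁻¹' tailInter T v W r 0 := by
  rw [biInter_preimage_iterate_eq_preimage fun i hi => hv i (Finset.mem_range.mp hi), tailInter,
    Finset.range_eq_Ico]

theorem measurableSet_tailInter {_ : MeasurableSpace Ω} (hT : Measurable T)
    (hW : ∀ i < r, MeasurableSet (W i)) (j : ℕ) : MeasurableSet (tailInter T v W r j) :=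
  .biInter (Finset.countable_toSet _) fun i hi =>
    (hT.iterate _) (hW i (Finset.mem_Ico.mp hi).2)

end TailSets

section Coding

variable {Ω α : Type*} [MeasurableSpace α] {T : Ω → Ω} {c : Ω → ℕ → α}

theorem measurable_comap_of_shift (hshift : ∀ y j, c (T y) j = c y (j + 1)) :
    Measurable[.comap c MeasurableSpace.pi, .comap c MeasurableSpace.pi] T := by
  have hcT : c ∘ T = (fun x j => x (j + 1)) ∘ c := funext fun y => funext (hshift y)
  rw [measurable_iff_comap_le, MeasurableSpace.comap_comp, hcT, ← MeasurableSpace.comap_comp]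
  exact MeasurableSpace.comap_mono (measurable_pi_lambda _ fun _ => measurable_pi_apply _).comap_le

theorem measurableSet_comap_cylinder {n : ℕ} {S : Set (Fin n → α)} (hS : MeasurableSet S) :
    MeasurableSet[.comap c MeasurableSpace.pi] {y | (fun j : Fin n => c y j) ∈ S} :=
  ⟨_, (measurable_pi_lambda _ fun _ => measurable_pi_apply _) hS, rfl⟩

variable {n v : ℕ → ℕ} {W : ℕ → Set Ω} {r : ℕ}

theorem measurableSet_comap_tailInter (hshift : ∀ y j, c (T y) j = c y (j + 1))
    (hW : ∀ i < r, ∃ S : Set (Fin (n i) → α),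
      MeasurableSet S ∧ W i = {y | (fun j : Fin (n i) => c y j) ∈ S}) (j : ℕ) :
    MeasurableSet[.comap c MeasurableSpace.pi] (tailInter T v W r j) :=
  measurableSet_tailInter (measurable_comap_of_shift hshift) (fun i hi => by
    obtain ⟨S, hS, hWS⟩ := hW i hi
    exact hWS ▸ measurableSet_comap_cylinder hS) j

end Coding

section Mixing

variable {Ω α : Type*} [MeasurableSpace Ω] [MeasurableSpace α]

def IsPhiFMixing (μ : Measure Ω) (T : Ω → Ω) (c : Ω → ℕ → α) (f : ℕ → ℕ) (φ : ℕ → ℝ) : Prop :=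
  ∀ (n k : ℕ) (S : Set (Fin n → α)) (S' : Set (ℕ → α)),
    MeasurableSet S → MeasurableSet S' → f n ≤ k →
    |(μ ({y | (fun j : Fin n => c y j) ∈ S} ∩ (T^[k + n]) ⁻¹' (c ⁻¹' S'))).toReal -
        (μ {y | (fun j : Fin n => c y j) ∈ S}).toReal * (μ (c ⁻¹' S')).toReal| ≤
      φ k * (μ {y | (fun j : Fin n => c y j) ∈ S}).toReal * (μ (c ⁻¹' S')).toReal

variable {μ : Measure Ω} {T : Ω → Ω} {c : Ω → ℕ → α} {f : ℕ → ℕ} {φ : ℕ → ℝ}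

theorem IsPhiFMixing.abs_measure_inter_preimage_sub_le (hmix : IsPhiFMixing μ T c f φ)
    (hφ : Antitone φ) {n m d : ℕ} {S : Set (Fin n → α)} (hS : MeasurableSet S) {V : Set Ω}
    (hV : MeasurableSet[.comap c MeasurableSpace.pi] V) (hm : f n + n ≤ m) (hd : d ≤ m - n) :
    |(μ ({y | (fun j : Fin n => c y j) ∈ S} ∩ T^[m] ⁻¹' V)).toReal -
        (μ {y | (fun j : Fin n => c y j) ∈ S}).toReal * (μ V).toReal| ≤
      φ d * (μ {y | (fun j : Fin n => c y j) ∈ S}).toReal * (μ V).toReal := by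
  obtain ⟨S', hS', rfl⟩ := hV
  have key := hmix n (m - n) S S' hS hS' (by omega)
  rw [Nat.sub_add_cancel (by omega)] at key
  refine key.trans ?_
  gcongr
  exact hφ hd

variable [IsProbabilityMeasure μ] {n v : ℕ → ℕ} {W : ℕ → Set Ω} {r d : ℕ}

theorem IsPhiFMixing.abs_measure_tailInter_sub_le (hmix : IsPhiFMixing μ T c f φ)
    (hφ0 : ∀ k, 0 ≤ φ k) (hφ : Antitone φ) (hshift : ∀ y j, c (T y) j = c y (j + 1))
    (hW : ∀ i < r, ∃ S : Set (Fin (n i) → α),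
      MeasurableSet S ∧ W i = {y | (fun j : Fin (n i) => c y j) ∈ S})
    (hv : MonotoneOn v (Set.Iio r)) (hgap : ∀ i, i + 1 < r → f (n i) + n i ≤ v (i + 1) - v i)
    (hd : ∀ i, i + 1 < r → d ≤ v (i + 1) - v i - n i) {j : ℕ} (hj : j < r) :
    |(μ (tailInter T v W r j)).toReal - (μ (W j)).toReal * (μ (tailInter T v W r (j + 1))).toReal|
      ≤ φ d * (μ (W j)).toReal * (μ (tailInter T v W r (j + 1))).toReal := by
  rw [tailInter_eq_inter hv hj]
  rcases (Nat.succ_le_of_lt hj).eq_or_lt with hjr | hjr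
  · rw [← hjr, tailInter_self]
    simpa using mul_nonneg (hφ0 d) ENNReal.toReal_nonneg
  obtain ⟨S, hS, hWS⟩ := hW j hj
  rw [hWS]
  exact hmix.abs_measure_inter_preimage_sub_le hφ hS
    (measurableSet_comap_tailInter hshift hW _) (hgap j hjr) (hd j hjr)

theorem IsPhiFMixing.abs_measure_biInter_sub_prod_le (hmix : IsPhiFMixing μ T c f φ)
    (hφ0 : ∀ k, 0 ≤ φ k) (hφ : Antitone φ) (hT : MeasurePreserving T μ μ) (hc : Measurable c)
    (hshift : ∀ y j, c (T y) j = c y (j + 1))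
    (hW : ∀ i < r, ∃ S : Set (Fin (n i) → α),
      MeasurableSet S ∧ W i = {y | (fun j : Fin (n i) => c y j) ∈ S})
    (hv : MonotoneOn v (Set.Iio r)) (hgap : ∀ i, i + 1 < r → f (n i) + n i ≤ v (i + 1) - v i)
    (hd : ∀ i, i + 1 < r → d ≤ v (i + 1) - v i - n i) :
    |(μ (⋂ i ∈ Finset.range r, T^[v i] ⁻¹' W i)).toReal - ∏ i ∈ Finset.range r, (μ (W i)).toReal|
      ≤ ((1 + φ d) ^ r - 1) * ∏ i ∈ Finset.range r, (μ (W i)).toReal := by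
  have hB := measurableSet_comap_tailInter (v := v) hshift hW 0
  rw [biInter_range_eq_preimage_tailInter fun i hi => hv (Nat.zero_lt_of_lt hi) hi i.zero_le,
    (hT.iterate (v 0)).measure_preimage (hc.comap_le _ hB).nullMeasurableSet]
  exact abs_sub_prod_le_of_abs_sub_mul_le (hφ0 d) r (fun j => (μ (tailInter T v W r j)).toReal)
    (fun j => (μ (W j)).toReal) (fun _ _ => ENNReal.toReal_nonneg) (by simp [tailInter_self])
    fun j hj => hmix.abs_measure_tailInter_sub_le hφ0 hφ hshift hW hv hgap hd hj

end Mixing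

/-- Lemma 4 (product mixing) for `(φ,f)`-mixing systems: if the gaps between the hitting times
`v_i` exceed `f(n_i) + n_i`, then the measure of the intersection `⋂ T^{-v_i} W_i` is close to
the product of the measures, with multiplicative error `(1+φ(d))^r - 1` where
`d = min_i (v_{i+1} - v_i - n_i)`. -/
theorem phi_f_mixing_product
    {Ω α : Type*} [MeasurableSpace Ω] [MeasurableSpace α]
    (μ : Measure Ω) [IsProbabilityMeasure μ] (T : Ω → Ω)
    (hT : MeasurePreserving T μ μ)
    -- the symbolic coding with respect to the partition 𝒜
    (c : Ω → ℕ → α) (hc : Measurable c)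
    (hshift : ∀ y j, c (T y) j = c y (j + 1))
    -- the separation function f and the mixing rate φ
    (f : ℕ → ℕ)
    (φ : ℕ → ℝ) (hφ0 : ∀ k, 0 ≤ φ k) (hφmono : Antitone φ)
    -- the (φ,f)-mixing property: U a union of n-cylinders, V in the σ-algebra of
    -- cylinders, gap k ≥ f(n)
    (hmix : ∀ (n k : ℕ) (S : Set (Fin n → α)) (S' : Set (ℕ → α)),
      MeasurableSet S → MeasurableSet S' → f n ≤ k →
      |(μ ({y | (fun j : Fin n => c y j) ∈ S} ∩ (T^[k + n]) ⁻¹' (c ⁻¹' S'))).toReal -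
          (μ {y | (fun j : Fin n => c y j) ∈ S}).toReal * (μ (c ⁻¹' S')).toReal| ≤
        φ k * (μ {y | (fun j : Fin n => c y j) ∈ S}).toReal * (μ (c ⁻¹' S')).toReal)
    -- the data: r > 1 sets W i, each a union of n i cylinders and of positive measure
    (r : ℕ) (hr : 1 < r) (n : ℕ → ℕ) (W : ℕ → Set Ω)
    (hW : ∀ i < r, ∃ S : Set (Fin (n i) → α),
      MeasurableSet S ∧ W i = {y | (fun j : Fin (n i) => c y j) ∈ S})
    (hWpos : ∀ i < r, 0 < μ (W i))
    -- the hitting vector v with sufficiently large gaps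
    (v : ℕ → ℕ) (hvmono : ∀ i, i + 1 < r → v i < v (i + 1))
    (hgap : ∀ i, i + 1 < r → f (n i) + n i ≤ v (i + 1) - v i) :
    |(μ (⋂ i ∈ Finset.range r, (T^[v i]) ⁻¹' W i)).toReal /
        (∏ i ∈ Finset.range r, (μ (W i)).toReal) - 1| ≤
      (1 + φ ((Finset.range (r - 1)).inf' (Finset.nonempty_range_iff.mpr (by omega)) fun i => v (i + 1) - v i - n i)) ^ r - 1 := by
  have hv : MonotoneOn v (Set.Iio r) :=
    monotoneOn_of_le_add_one Set.ordConnected_Iio fun i _ _ hi => (hvmono i hi).le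
  have hprod : 0 < ∏ i ∈ Finset.range r, (μ (W i)).toReal := Finset.prod_pos fun i hi =>
    ENNReal.toReal_pos (hWpos i (Finset.mem_range.mp hi)).ne' (measure_ne_top μ _)
  rw [div_sub_one hprod.ne', abs_div, abs_of_pos hprod, div_le_iff₀ hprod]
  exact IsPhiFMixing.abs_measure_biInter_sub_prod_le hmix hφ0 hφmono hT hc hshift hW hv hgap
    fun i hi => Finset.inf'_le _ (Finset.mem_range.mpr (by omega))
end

section
/- The return-time compound Poisson distribution with weights $e^{-t}\hat{P}_r(t,p)$, where $\hat{P}_r(t,p)=\sum_{j=0}^r p^{r-j}(1-p)^{j+1}\frac{t^j}{j!}\binom{r}{j}$, has mean $\frac{t+p}{1-p}$ and variance $\frac{t+tp+p}{(1-p)^2}$. -/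
/-- The return-time analogue of the Pólya-Aeppli weights. -/
noncomputable def polyaAeppliPhat (t p : ℝ) (r : ℕ) : ℝ :=
  ∑ j ∈ Finset.range (r + 1),
    p ^ (r - j) * (1 - p) ^ (j + 1) * t ^ j / (Nat.factorial j) * (Nat.choose r j)

/-!
`e^{-t} P̂_r(t, p)` is the law of `J + D`, where `J` is Poisson with mean `t` and, given `J = j`,
`D` is negative binomial: `P(D = d) = C(j + d, j) (1 - p)^(j + 1) p^d`. Conditionally on `J = j`,
the negative binomial series gives the rising factorial moments
`E[(J + D + 1)^(m) | J = j] = (j + 1)^(m) / (1 - p)^m`; averaging over `J` with the Poisson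
factorial moments `E[J^(k)] = t^k` yields the first two moments of `J + D`.
-/

open Finset Nat

theorem Nat.succ_ascFactorial_mul_choose (n j m : ℕ) :
    (n + 1).ascFactorial m * n.choose j = (j + 1).ascFactorial m * (n + m).choose (j + m) := by
  induction m with
  | zero => simp
  | succ m ih =>
    calc (n + 1).ascFactorial (m + 1) * n.choose j
        = (j + 1).ascFactorial m * ((n + m + 1) * (n + m).choose (j + m)) := by
          rw [ascFactorial_succ, mul_assoc, ih]; ring
      _ = (j + 1).ascFactorial (m + 1) * (n + (m + 1)).choose (j + (m + 1)) := by
          rw [add_one_mul_choose_eq, ascFactorial_succ]; ring_nf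

theorem hasSum_ascFactorial_mul_choose_mul_geometric {𝕜 : Type*} [NormedField 𝕜] {p : 𝕜}
    (hp : ‖p‖ < 1) (j m : ℕ) :
    HasSum (fun d ↦ ((j + d + 1).ascFactorial m * (j + d).choose j : 𝕜) * p ^ d)
      ((j + 1).ascFactorial m / (1 - p) ^ (j + m + 1)) := by
  have h := (hasSum_choose_mul_geometric_of_norm_lt_one (j + m) hp).mul_left
    ((j + 1).ascFactorial m : 𝕜)
  rw [mul_one_div] at h
  refine h.congr_fun fun d ↦ ?_
  rw [← mul_assoc, ← Nat.cast_mul, ← Nat.cast_mul, succ_ascFactorial_mul_choose,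
    show j + d + m = d + (j + m) by ring]

theorem hasSum_descFactorial_mul_poisson (t : ℝ) (k : ℕ) :
    HasSum (fun j ↦ (j.descFactorial k : ℝ) * (Real.exp (-t) * t ^ j / j !)) (t ^ k) := by
  rw [← hasSum_nat_add_iff' k, sum_eq_zero fun j hj ↦ by
    rw [descFactorial_eq_zero_iff_lt.2 (mem_range.1 hj), cast_zero, zero_mul], sub_zero]
  have hexp : HasSum (fun j ↦ t ^ j / j !) (Real.exp t) := by
    rw [Real.exp_eq_exp_ℝ]; exact NormedSpace.expSeries_div_hasSum_exp t
  have h := hexp.mul_left (Real.exp (-t) * t ^ k)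
  rw [mul_right_comm, ← Real.exp_add, neg_add_cancel, Real.exp_zero, one_mul] at h
  refine h.congr_fun fun j ↦ ?_
  have hfac : ((j + k).descFactorial k * j ! : ℝ) = (j + k) ! := by
    rw [mul_comm]
    exact_mod_cast Nat.add_sub_cancel j k ▸ factorial_mul_descFactorial (le_add_self)
  have : (j ! : ℝ) ≠ 0 := by positivity
  rw [← hfac, pow_add]
  field_simp

theorem HasSum.prod_of_nonneg {β γ : Type*} {f : β × γ → ℝ} {g : β → ℝ} {a : ℝ}
    (hf : 0 ≤ f) (hfib : ∀ b, HasSum (fun c ↦ f (b, c)) (g b)) (hg : HasSum g a) :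
    HasSum f a := by
  have hs : Summable f := (summable_prod_of_nonneg hf).2
    ⟨fun b ↦ (hfib b).summable, by simpa only [(hfib _).tsum_eq] using hg.summable⟩
  rw [hg.unique (hs.hasSum.prod_fiberwise hfib)]
  exact hs.hasSum

theorem HasSum.sum_range_succ_sub {M : Type*} [AddCommMonoid M] [TopologicalSpace M]
    [ContinuousAdd M] [RegularSpace M] {f : ℕ × ℕ → M} {a : M} (h : HasSum f a) :
    HasSum (fun n ↦ ∑ j ∈ range (n + 1), f (j, n - j)) a := by
  have h' := ((Equiv.hasSum_iff HasAntidiagonal.sigmaAntidiagonalEquivProd).2 h).sigma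
    fun n ↦ (HasAntidiagonal.antidiagonal n).hasSum _
  simpa only [Nat.sum_antidiagonal_eq_sum_range_succ_mk] using h'

/-- The joint law of `(J, D)`. -/
noncomputable def polyaAeppliJoint (t p : ℝ) (x : ℕ × ℕ) : ℝ :=
  Real.exp (-t) * t ^ x.1 / x.1 ! * ((1 - p) ^ (x.1 + 1) * ((x.1 + x.2).choose x.1 * p ^ x.2))

theorem exp_neg_mul_polyaAeppliPhat (t p : ℝ) (r : ℕ) :
    Real.exp (-t) * polyaAeppliPhat t p r =
      ∑ j ∈ range (r + 1), polyaAeppliJoint t p (j, r - j) := by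
  rw [polyaAeppliPhat, mul_sum]
  refine sum_congr rfl fun j hj ↦ ?_
  rw [polyaAeppliJoint, Nat.add_sub_cancel' (Nat.lt_succ_iff.1 (mem_range.1 hj))]
  ring

section Moments

variable {t p : ℝ}

theorem hasSum_ascFactorial_mul_polyaAeppli (ht : 0 ≤ t) (hp0 : 0 ≤ p) (hp1 : p < 1) (m : ℕ)
    {s : ℝ}
    (hs : HasSum (fun j ↦ ((j + 1).ascFactorial m : ℝ) * (Real.exp (-t) * t ^ j / j !)) s) :
    HasSum (fun r ↦ ((r + 1).ascFactorial m : ℝ) * (Real.exp (-t) * polyaAeppliPhat t p r))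
      (s / (1 - p) ^ m) := by
  have hq : 0 < 1 - p := by linarith
  have hfib (j : ℕ) :
      HasSum (fun d ↦ ((j + d + 1).ascFactorial m : ℝ) * polyaAeppliJoint t p (j, d))
        (((j + 1).ascFactorial m : ℝ) * (Real.exp (-t) * t ^ j / j !) / (1 - p) ^ m) := by
    have h := (hasSum_ascFactorial_mul_choose_mul_geometric
      (by rwa [Real.norm_of_nonneg hp0]) j m).mul_left
        (Real.exp (-t) * t ^ j / j ! * (1 - p) ^ (j + 1))
    have hval : Real.exp (-t) * t ^ j / j ! * (1 - p) ^ (j + 1) *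
        ((j + 1).ascFactorial m / (1 - p) ^ (j + m + 1)) =
        ((j + 1).ascFactorial m : ℝ) * (Real.exp (-t) * t ^ j / j !) / (1 - p) ^ m := by
      field_simp; ring
    rw [hval] at h
    exact h.congr_fun fun d ↦ by simp only [polyaAeppliJoint]; ring
  have hjoint := HasSum.prod_of_nonneg
    (f := fun x ↦ ((x.1 + x.2 + 1).ascFactorial m : ℝ) * polyaAeppliJoint t p x)
    (fun x ↦ by simp only [polyaAeppliJoint]; positivity) hfib (hs.div_const _)
  refine hjoint.sum_range_succ_sub.congr_fun fun r ↦ ?_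
  rw [exp_neg_mul_polyaAeppliPhat, mul_sum]
  refine sum_congr rfl fun j hj ↦ ?_
  rw [Nat.add_sub_cancel' (Nat.lt_succ_iff.1 (mem_range.1 hj))]

theorem hasSum_polyaAeppli (ht : 0 ≤ t) (hp0 : 0 ≤ p) (hp1 : p < 1) :
    HasSum (fun r ↦ Real.exp (-t) * polyaAeppliPhat t p r) 1 := by
  have h := hasSum_ascFactorial_mul_polyaAeppli ht hp0 hp1 0
    ((hasSum_descFactorial_mul_poisson t 0).congr_fun fun j ↦ by simp)
  simpa using h

theorem hasSum_succ_mul_polyaAeppli (ht : 0 ≤ t) (hp0 : 0 ≤ p) (hp1 : p < 1) :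
    HasSum (fun r : ℕ ↦ ((r : ℝ) + 1) * (Real.exp (-t) * polyaAeppliPhat t p r))
      ((t + 1) / (1 - p)) := by
  have P (k : ℕ) := hasSum_descFactorial_mul_poisson t k
  have h := hasSum_ascFactorial_mul_polyaAeppli ht hp0 hp1 1
    (((P 1).add (P 0)).congr_fun fun j ↦ by simp [ascFactorial_succ]; ring)
  simpa [ascFactorial_succ, add_comm] using h

theorem hasSum_succ_mul_succ_succ_mul_polyaAeppli (ht : 0 ≤ t) (hp0 : 0 ≤ p) (hp1 : p < 1) :
    HasSum
      (fun r : ℕ ↦ ((r : ℝ) + 1) * ((r : ℝ) + 2) * (Real.exp (-t) * polyaAeppliPhat t p r))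
      ((t ^ 2 + 4 * t + 2) / (1 - p) ^ 2) := by
  have P (k : ℕ) := hasSum_descFactorial_mul_poisson t k
  have h := hasSum_ascFactorial_mul_polyaAeppli ht hp0 hp1 2
    ((((P 2).add ((P 1).mul_left 4)).add ((P 0).mul_left 2)).congr_fun fun j ↦ by
      cases j <;> simp [ascFactorial_succ, descFactorial_succ]; ring)
  rw [pow_one, pow_zero, mul_one] at h
  exact h.congr_fun fun r ↦ by push_cast [ascFactorial_succ, ascFactorial_zero]; ring

end Moments

theorem polyaAeppliHat_mean_variance (t p : ℝ) (ht : 0 < t) (hp0 : 0 < p) (hp1 : p < 1) :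
    ∑' r : ℕ, (r : ℝ) * (Real.exp (-t) * polyaAeppliPhat t p r) = (t + p) / (1 - p) ∧
    ∑' r : ℕ, (r : ℝ) ^ 2 * (Real.exp (-t) * polyaAeppliPhat t p r) - ((t + p) / (1 - p)) ^ 2 =
      (t + t * p + p) / (1 - p) ^ 2 := by
  have hq : 1 - p ≠ 0 := by linarith
  have M0 := hasSum_polyaAeppli ht.le hp0.le hp1
  have M1 := hasSum_succ_mul_polyaAeppli ht.le hp0.le hp1
  have M2 := hasSum_succ_mul_succ_succ_mul_polyaAeppli ht.le hp0.le hp1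
  have hmean := (M1.sub M0).congr_fun
    (g := fun r : ℕ ↦ (r : ℝ) * (Real.exp (-t) * polyaAeppliPhat t p r)) fun r ↦ by ring
  have hsq := ((M2.sub (M1.mul_left 3)).add M0).congr_fun
    (g := fun r : ℕ ↦ (r : ℝ) ^ 2 * (Real.exp (-t) * polyaAeppliPhat t p r)) fun r ↦ by ring
  rw [hmean.tsum_eq, hsq.tsum_eq]
  constructor <;> field_simp <;> ring
end
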